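/- Let Θ be a nondegenerate symmetric d-multilinear form on a finite-dimensional k-vector space V, and suppose V = V₁ ⊕ ⋯ ⊕ V_t is an orthogonal decomposition of (V,Θ), with Θᵢ the restriction of Θ to Vᵢ. Then the center Z(V,Θ) is isomorphic as a k-algebra to the product Z(V₁,Θ₁) × ⋯ × Z(V_t,Θ_t). -/
import Mathlib


/-- Let `Θ` be a nondegenerate symmetric `d`-multilinear form on a
finite-dimensional `k`-vector space `V`, and suppose `V = V₁ ⊕ ⋯ ⊕ V_t` is an orthogonal
decomposition of `(V,Θ)`, with `Θᵢ` the restriction of `Θ` to `Vᵢ`. Then the center `Z(V,Θ)`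
is isomorphic as a `k`-algebra to the product `Z(V₁,Θ₁) × ⋯ × Z(V_t,Θ_t)`: there is a
bijection between the two centers preserving addition, scalar multiplication, composition
and the identity. -/
theorem stmt_6 {k V : Type*} [Field k] [AddCommGroup V] [Module k V]
    [FiniteDimensional k V] {d : ℕ} (hd : 3 ≤ d)
    (hchar : CharZero k ∨ ∃ p : ℕ, CharP k p ∧ d < p)
    (Θ : MultilinearMap k (fun _ : Fin d => V) k)
    (hsymm : ∀ (σ : Equiv.Perm (Fin d)) (v : Fin d → V), Θ (v ∘ σ) = Θ v)
    (hnd : ∀ u : V,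
      (∀ v : Fin d → V, Θ (Function.update v ⟨0, by omega⟩ u) = 0) → u = 0)
    {t : ℕ} (W : Fin t → Submodule k V)
    (hW0 : ∀ i, W i ≠ ⊥)
    (hindep : iSupIndep W) (hspan : ⨆ i, W i = ⊤)
    (horth : ∀ v : Fin d → V, (¬ ∃ i, ∀ s, v s ∈ W i) → Θ v = 0) :
    let i0 : Fin d := ⟨0, by omega⟩
    let i1 : Fin d := ⟨1, by omega⟩
    let Z : Set (Module.End k V) := {φ | ∀ v : Fin d → V,
      Θ (Function.update v i0 (φ (v i0))) = Θ (Function.update v i1 (φ (v i1)))}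
    let Zi : ∀ i : Fin t, Set (Module.End k ↥(W i)) := fun i =>
      {ψ | ∀ w : Fin d → ↥(W i),
        (Θ.compLinearMap fun _ => (W i).subtype) (Function.update w i0 (ψ (w i0)))
          = (Θ.compLinearMap fun _ => (W i).subtype) (Function.update w i1 (ψ (w i1)))}
    ∃ F : Module.End k V → (∀ i : Fin t, Module.End k ↥(W i)),
      Set.BijOn F Z {g | ∀ i, g i ∈ Zi i} ∧
      (∀ φ ∈ Z, ∀ ψ ∈ Z, F (φ + ψ) = F φ + F ψ) ∧
      (∀ c : k, ∀ φ ∈ Z, F (c • φ) = c • F φ) ∧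
      (∀ φ ∈ Z, ∀ ψ ∈ Z, F (φ * ψ) = F φ * F ψ) ∧
      F 1 = 1 := by
  intro i0 i1 Z Zi
  classical
  have hne10 : i1 ≠ i0 := Fin.ne_of_val_ne Nat.one_ne_zero
  have hne01 : i0 ≠ i1 := hne10.symm
  set s2 : Fin d := ⟨2, by omega⟩ with hs2def
  have hs20 : s2 ≠ i0 := Fin.ne_of_val_ne (by norm_num)
  have hs21 : s2 ≠ i1 := Fin.ne_of_val_ne (by norm_num)
  -- the sum map from the product of the `W i` to `V`
  let S : ((i : Fin t) → ↥(W i)) →ₗ[k] V :=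
    { toFun := fun g => ∑ i, ((g i : V))
      map_add' := by intro g h; simp [Finset.sum_add_distrib]
      map_smul' := by intro c g; simp [Finset.smul_sum] }
  have hSapply : ∀ g : (i : Fin t) → ↥(W i), S g = ∑ i, ((g i : V)) := fun g => rfl
  have hsum_single : ∀ (i : Fin t) (x : ↥(W i)), (∑ j, (((Pi.single i x : ∀ j, ↥(W j)) j : V))) = (x : V) := by
    intro i x
    rw [Finset.sum_eq_single i]
    · rw [Pi.single_eq_same]
    · intro j _ hj
      rw [Pi.single_eq_of_ne hj]; rfl
    · intro h; exact absurd (Finset.mem_univ i) h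
  have hinj : Function.Injective S := by
    rw [← LinearMap.ker_eq_bot, LinearMap.ker_eq_bot']
    intro g hg
    have hg' : (∑ j, ((g j : V))) = 0 := hg
    funext i
    refine Subtype.ext ?_
    have h1 : ((g i : V)) + ∑ j ∈ Finset.univ.erase i, ((g j : V)) = 0 := by
      have := Finset.add_sum_erase Finset.univ (fun j => ((g j : V))) (Finset.mem_univ i)
      rw [this]
      exact hg'
    have h2 : ((g i : V)) = - ∑ j ∈ Finset.univ.erase i, ((g j : V)) :=
      eq_neg_of_add_eq_zero_left h1
    have hmem : ((g i : V)) ∈ ⨆ j, ⨆ _ : j ≠ i, W j := by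
      rw [h2]
      exact Submodule.neg_mem _ (Submodule.sum_mem _ fun j hj =>
        Submodule.mem_iSup_of_mem j (Submodule.mem_iSup_of_mem (Finset.ne_of_mem_erase hj)
          (g j).2))
    exact Submodule.disjoint_def.mp (hindep i) _ (g i).2 hmem
  have hsurj : Function.Surjective S := by
    intro v
    have hle : (⨆ i, W i) ≤ LinearMap.range S := by
      refine iSup_le fun i x hx => ⟨(Pi.single i ⟨x, hx⟩ : ∀ j, ↥(W j)), ?_⟩
      rw [hSapply, hsum_single]
    obtain ⟨g, hgv⟩ := hle (hspan ▸ Submodule.mem_top)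
    exact ⟨g, hgv⟩
  let E : ((i : Fin t) → ↥(W i)) ≃ₗ[k] V := LinearEquiv.ofBijective S ⟨hinj, hsurj⟩
  let π : (i : Fin t) → V →ₗ[k] ↥(W i) := fun i =>
    (LinearMap.proj i) ∘ₗ (E.symm : V →ₗ[k] ((i : Fin t) → ↥(W i)))
  have hdecomp : ∀ v : V, (∑ i, ((π i v : V))) = v := by
    intro v
    exact E.apply_symm_apply v
  have hπ_single : ∀ (i j : Fin t) (x : ↥(W i)), π j ((x : V)) = (Pi.single i x : ∀ j, ↥(W j)) j := by
    intro i j x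
    have h : E.symm ((x : V)) = (Pi.single i x : ∀ j, ↥(W j)) := by
      rw [LinearEquiv.symm_apply_eq]
      exact (hsum_single i x).symm
    show (E.symm ((x : V))) j = _
    rw [h]
  have hπ_self : ∀ (i : Fin t) (x : ↥(W i)), π i ((x : V)) = x := by
    intro i x; rw [hπ_single, Pi.single_eq_same]
  have hco_self : ∀ (i : Fin t) (v : V), v ∈ W i → ((π i v : V)) = v := by
    intro i v hv
    exact congrArg Subtype.val (hπ_self i ⟨v, hv⟩)
  have hzero : ∀ (i j : Fin t) (v : V), v ∈ W i → j ≠ i → π j v = 0 := by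
    intro i j v hv hji
    have := hπ_single i j ⟨v, hv⟩
    rwa [Pi.single_eq_of_ne hji] at this
  have hzero' : ∀ (i j : Fin t) (v : V), v ∈ W i → j ≠ i → ((π j v : V)) = 0 := by
    intro i j v hv hji
    rw [hzero i j v hv hji]; rfl
  -- Lemma A: orthogonality across different summands
  have lemA : ∀ (j : Fin d → Fin t) (u : Fin d → V), (∀ s, u s ∈ W (j s)) →
      (∃ s s', j s ≠ j s') → Θ u = 0 := by
    rintro j u hu ⟨s, s', hss⟩
    by_cases hall : ∃ i, ∀ r, u r ∈ W i
    · obtain ⟨i, hi⟩ := hall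
      rcases ne_or_eq i (j s) with h | h
      · exact Θ.map_coord_zero s
          (Submodule.disjoint_def.mp (hindep.pairwiseDisjoint h.symm) _ (hu s) (hi s))
      · have h' : j s' ≠ i := by rw [h]; exact hss.symm
        exact Θ.map_coord_zero s'
          (Submodule.disjoint_def.mp (hindep.pairwiseDisjoint h') _ (hu s') (hi s'))
    · exact horth u hall
  -- Lemma B: Θ splits as a sum over the components
  have lemB : ∀ u : Fin d → V, Θ u = ∑ i : Fin t, Θ (fun s => ((π i (u s) : V))) := by
    intro u
    have h1 : u = fun s => ∑ i : Fin t, ((π i (u s) : V)) :=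
      funext fun s => (hdecomp (u s)).symm
    conv_lhs => rw [h1]
    rw [Θ.map_sum]
    have hvan : ∀ r : Fin d → Fin t,
        r ∉ (Finset.univ : Finset (Fin t)).image (fun (i : Fin t) (_ : Fin d) => i) →
        Θ (fun s => ((π (r s) (u s) : V))) = 0 := by
      intro r hr
      refine lemA r _ (fun s => (π (r s) (u s)).2) ?_
      by_contra hc
      push_neg at hc
      exact hr (Finset.mem_image.mpr ⟨r i0, Finset.mem_univ _,
        funext fun s => hc i0 s⟩)
    rw [← Finset.sum_subset (Finset.subset_univ _) (fun r _ hr => hvan r hr),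
      Finset.sum_image (fun i _ i' _ h => congrFun h i0)]
  -- collapsing lemma
  have hcollapse : ∀ (a : Fin d) (l : Fin t) (x : Fin d → V) (b : V), b ∈ W l →
      Θ (Function.update x a b) = Θ (Function.update (fun s => ((π l (x s) : V))) a b) := by
    intro a l x b hb
    rw [lemB (Function.update x a b)]
    rw [Finset.sum_eq_single l]
    · congr 1
      funext s
      rcases eq_or_ne s a with rfl | hs
      · rw [Function.update_self, Function.update_self]
        exact hco_self l b hb
      · rw [Function.update_of_ne hs, Function.update_of_ne hs]
    · intro m _ hml
      refine Θ.map_coord_zero a ?_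
      show ((π m (Function.update x a b a) : V)) = 0
      rw [Function.update_self]
      exact hzero' l m b hb hml
    · intro h; exact absurd (Finset.mem_univ l) h
  -- elements of the center preserve each summand
  have hzw : ∀ φ, φ ∈ Z → ∀ (i : Fin t) (v : V), v ∈ W i → φ v ∈ W i := by
    intro φ hφ i v hv
    have hφ' : ∀ x : Fin d → V,
        Θ (Function.update x i0 (φ (x i0))) = Θ (Function.update x i1 (φ (x i1))) := hφ
    have hkey : ∀ j : Fin t, j ≠ i → ((π j (φ v) : V)) = 0 := by
      intro j hji
      refine hnd _ (fun x => ?_)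
      show Θ (Function.update x i0 ((π j (φ v) : V))) = 0
      set y : Fin d → V := fun s => ((π j (x s) : V)) with hy
      have h2 : Θ (Function.update y i0 (φ v)) =
          Θ (Function.update y i0 ((π j (φ v) : V))) := by
        conv_lhs => rw [← hdecomp (φ v)]
        rw [Θ.map_update_sum]
        refine Finset.sum_eq_single j (fun l _ hlj => ?_)
          (fun h => absurd (Finset.mem_univ j) h)
        refine lemA (Function.update (fun _ => j) i0 l) _ (fun s => ?_) ⟨i0, i1, ?_⟩
        · rcases eq_or_ne s i0 with rfl | hs
          · rw [Function.update_self, Function.update_self]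
            exact (π l (φ v)).2
          · rw [Function.update_of_ne hs, Function.update_of_ne hs]
            exact (π j (x s)).2
        · rw [Function.update_self, Function.update_of_ne hne10]
          exact hlj
      have h3 : Θ (Function.update y i0 (φ v)) = 0 := by
        have hc := hφ' (Function.update y i0 v)
        rw [Function.update_self, Function.update_idem] at hc
        rw [Function.update_of_ne hne10] at hc
        rw [hc, lemB]
        refine Finset.sum_eq_zero fun m _ => ?_
        rcases eq_or_ne m i with hmi | hmi
        · refine Θ.map_coord_zero s2 ?_
          show ((π m ((Function.update (Function.update y i0 v) i1 (φ (y i1))) s2) : V)) = 0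
          rw [Function.update_of_ne hs21, Function.update_of_ne hs20]
          exact hzero' j m _ (π j (x s2)).2 (by rw [hmi]; exact hji.symm)
        · refine Θ.map_coord_zero i0 ?_
          show ((π m ((Function.update (Function.update y i0 v) i1 (φ (y i1))) i0) : V)) = 0
          rw [Function.update_of_ne hne01, Function.update_self]
          exact hzero' i m v hv hmi
      calc Θ (Function.update x i0 ((π j (φ v) : V)))
          = Θ (Function.update y i0 ((π j (φ v) : V))) :=
            hcollapse i0 j x _ (π j (φ v)).2
        _ = Θ (Function.update y i0 (φ v)) := h2.symm
        _ = 0 := h3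
    have hrepr : φ v = ((π i (φ v) : V)) := by
      conv_lhs => rw [← hdecomp (φ v)]
      rw [Finset.sum_eq_single i]
      · intro j _ hji; exact hkey j hji
      · intro h; exact absurd (Finset.mem_univ i) h
    rw [hrepr]
    exact (π i (φ v)).2
  -- coercion-update commutation
  have hco_update : ∀ (l : Fin t) (w : Fin d → ↥(W l)) (a : Fin d) (b : ↥(W l)),
      (fun s => ((W l).subtype (Function.update w a b s))) =
        Function.update (fun s => ((w s : V))) a ((b : V)) := by
    intro l w a b
    funext s
    exact Function.apply_update (fun _ (x : ↥(W l)) => ((x : V))) w a b s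
  -- the map F
  refine ⟨fun φ i => (π i) ∘ₗ (φ ∘ₗ (W i).subtype), ⟨?_, ?_, ?_⟩, ?_, ?_, ?_, ?_⟩
  · -- MapsTo
    intro φ hφ
    have hφ' : ∀ x : Fin d → V,
        Θ (Function.update x i0 (φ (x i0))) = Θ (Function.update x i1 (φ (x i1))) := hφ
    intro i
    show ∀ w : Fin d → ↥(W i), _ = _
    intro w
    rw [MultilinearMap.compLinearMap_apply, MultilinearMap.compLinearMap_apply,
      hco_update, hco_update]
    have hcoψ : ∀ a : Fin d, ((((π i) ∘ₗ (φ ∘ₗ (W i).subtype)) (w a) : V)) = φ ((w a : V)) :=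
      fun a => hco_self i _ (hzw φ hφ i _ (w a).2)
    rw [hcoψ i0, hcoψ i1]
    exact hφ' (fun s => ((w s : V)))
  · -- InjOn
    intro φ hφ ψ hψ h
    have hag : ∀ (i : Fin t) (v : V), v ∈ W i → φ v = ψ v := by
      intro i v hv
      have h1 := congrFun h i
      have h2 : ((π i (φ v) : V)) = ((π i (ψ v) : V)) :=
        congrArg (fun f : Module.End k ↥(W i) => ((f ⟨v, hv⟩ : V))) h1
      rwa [hco_self i _ (hzw φ hφ i v hv), hco_self i _ (hzw ψ hψ i v hv)] at h2
    have hle : (⊤ : Submodule k V) ≤ LinearMap.eqLocus φ ψ := by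
      rw [← hspan]
      exact iSup_le fun i v hv => LinearMap.mem_eqLocus.mpr (hag i v hv)
    exact LinearMap.ext fun v => LinearMap.mem_eqLocus.mp (hle Submodule.mem_top)
  · -- SurjOn
    intro g hg
    have hg' : ∀ i, g i ∈ Zi i := hg
    set φ : Module.End k V := ∑ l : Fin t, (W l).subtype ∘ₗ ((g l) ∘ₗ π l) with hφdef
    have hφapp : ∀ v : V, φ v = ∑ l, ((g l (π l v) : V)) := by
      intro v
      rw [hφdef, LinearMap.sum_apply]
      rfl
    have hφZ : φ ∈ Z := by
      show ∀ v : Fin d → V, _ = _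
      intro v
      have key : ∀ a : Fin d, Θ (Function.update v a (φ (v a))) =
          ∑ l, Θ (Function.update (fun s => ((π l (v s) : V))) a ((g l (π l (v a)) : V))) := by
        intro a
        rw [hφapp, Θ.map_update_sum]
        exact Finset.sum_congr rfl fun l _ => hcollapse a l v _ (g l (π l (v a))).2
      rw [key i0, key i1]
      refine Finset.sum_congr rfl fun l _ => ?_
      have h := hg' l (fun s => π l (v s))
      rw [MultilinearMap.compLinearMap_apply, MultilinearMap.compLinearMap_apply,
        hco_update, hco_update] at h
      exact h
    refine ⟨φ, hφZ, ?_⟩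
    funext i
    refine LinearMap.ext fun x => ?_
    show π i (φ ((x : V))) = g i x
    rw [hφapp, map_sum]
    rw [Finset.sum_eq_single i]
    · rw [hπ_self i (g i (π i ((x : V)))), hπ_self i x]
    · intro l _ hli
      exact hzero l i _ (g l (π l ((x : V)))).2 hli.symm
    · intro h; exact absurd (Finset.mem_univ i) h
  · -- additive
    intro φ _ ψ _
    funext i
    refine LinearMap.ext fun x => ?_
    show π i ((φ + ψ) ((x : V))) = π i (φ ((x : V))) + π i (ψ ((x : V)))
    rw [LinearMap.add_apply, map_add]
  · -- scalar multiplication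
    intro c φ _
    funext i
    refine LinearMap.ext fun x => ?_
    show π i ((c • φ) ((x : V))) = c • π i (φ ((x : V)))
    rw [LinearMap.smul_apply, map_smul]
  · -- multiplicative
    intro φ hφ ψ hψ
    funext i
    refine LinearMap.ext fun x => ?_
    show π i ((φ * ψ) ((x : V))) = π i (φ (((π i (ψ ((x : V)))) : V)))
    rw [hco_self i (ψ ((x : V))) (hzw ψ hψ i _ x.2)]
    rfl
  · -- identity
    funext i
    refine LinearMap.ext fun x => ?_
    show π i ((1 : Module.End k V) ((x : V))) = x
    exact hπ_self i x
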